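/- arXiv:0808.1992 — 5 statements merged into one kernel-verified Lean document; each statement's English description precedes it below -/
import Mathlib

section
/- For a definite nonnegative matrix A (λ(A) = 1), the set of subeigenvectors V*(A) = {x ∈ ℝ₊ⁿ : A⊗x ≤ x} equals the set of fixed points {x : A*⊗x = x} of the Kleene star A*. -/
open Finset

/-- Max-times matrix product: `(A ⊗ B) i j = max_k (A i k * B k j)`. -/
noncomputable def mProd {n : ℕ} (A B : Matrix (Fin n) (Fin n) NNReal) :
    Matrix (Fin n) (Fin n) NNReal :=
  fun i j => univ.sup fun k => A i k * B k j

/-- Max-algebraic matrix powers, `mPow A 0 = I`. -/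
noncomputable def mPow {n : ℕ} (A : Matrix (Fin n) (Fin n) NNReal) :
    ℕ → Matrix (Fin n) (Fin n) NNReal
  | 0 => fun i j => if i = j then 1 else 0
  | k + 1 => mProd (mPow A k) A

/-- Kleene star `A* = I ⊕ A ⊕ ... ⊕ A^{n-1}` in max algebra. -/
noncomputable def klStar {n : ℕ} (A : Matrix (Fin n) (Fin n) NNReal) :
    Matrix (Fin n) (Fin n) NNReal :=
  fun i j => (Finset.range n).sup fun k => mPow A k i j

/-- Partial "sums" `I ⊕ A ⊕ ... ⊕ A^m` of the Kleene star series. -/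
noncomputable def kPartial {n : ℕ} (A : Matrix (Fin n) (Fin n) NNReal) (m : ℕ) :
    Matrix (Fin n) (Fin n) NNReal :=
  fun i j => (Finset.range (m + 1)).sup fun k => mPow A k i j

/-- The weight of the cycle given by the list `l` (with wrap-around edge). -/
def cycleWeight {n : ℕ} (A : Matrix (Fin n) (Fin n) NNReal) (l : List (Fin n)) : NNReal :=
  ((l.zip (l.rotate 1)).map fun p => A p.1 p.2).prod

/-- The geometric mean of a cycle: `w(σ,A)^{1/k}`. -/
noncomputable def cycleMean {n : ℕ} (A : Matrix (Fin n) (Fin n) NNReal) (l : List (Fin n)) :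
    NNReal :=
  (cycleWeight A l) ^ ((l.length : ℝ)⁻¹)

/-- The maximum cycle geometric mean `λ(A)`. -/
noncomputable def maxCycleMean {n : ℕ} (A : Matrix (Fin n) (Fin n) NNReal) : NNReal :=
  sSup {x | ∃ l : List (Fin n), l ≠ [] ∧ x = cycleMean A l}

/-- `(i,j)` is a critical edge: it lies on a cycle attaining `λ(A)`. -/
def criticalEdge {n : ℕ} (A : Matrix (Fin n) (Fin n) NNReal) (i j : Fin n) : Prop :=
  ∃ l : List (Fin n), l ≠ [] ∧ cycleMean A l = maxCycleMean A ∧ (i, j) ∈ l.zip (l.rotate 1)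

/-- Max-algebraic matrix-vector product. -/
noncomputable def mVec {n : ℕ} (A : Matrix (Fin n) (Fin n) NNReal) (x : Fin n → NNReal) :
    Fin n → NNReal :=
  fun i => univ.sup fun j => A i j * x j

/-!
If `A ⊗ x ≤ x` then `A^k ⊗ x ≤ x` for every `k`, so `A* ⊗ x ≤ x`, and `I ≤ A*` gives
equality. Conversely, `A* ⊗ x = x` gives `A ⊗ x = (A ⊗ A*) ⊗ x ≤ A* ⊗ x = x` as soon as
`A ⊗ A* ≤ A*`, i.e. as soon as every power `A^p` is dominated by `A*`. Since `λ(A) = 1`, every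
cycle has weight at most `1`, so any walk can be shortened to one without repeated vertices,
of length `< n`, without decreasing its weight; as `(A^p)_{ij}` is the weight of a heaviest
walk of length `p` from `i` to `j`, this bounds it by `A*_{ij}`.
-/

variable {n : ℕ}

lemma mProd_assoc (A B C : Matrix (Fin n) (Fin n) NNReal) :
    mProd (mProd A B) C = mProd A (mProd B C) := by
  funext i j
  simp only [mProd, NNReal.finset_sup_mul, NNReal.mul_finset_sup, mul_assoc]
  exact Finset.sup_comm _ _ _

lemma mProd_mPow_zero (A B : Matrix (Fin n) (Fin n) NNReal) : mProd B (mPow A 0) = B := by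
  funext i j
  apply le_antisymm
  · refine Finset.sup_le fun k _ => ?_
    by_cases hkj : k = j <;> simp [mPow, hkj]
  · calc B i j = B i j * mPow A 0 j j := by simp [mPow]
      _ ≤ _ := Finset.le_sup (f := fun k => B i k * mPow A 0 k j) (mem_univ j)

lemma mPow_zero_mProd (A B : Matrix (Fin n) (Fin n) NNReal) : mProd (mPow A 0) B = B := by
  funext i j
  apply le_antisymm
  · refine Finset.sup_le fun k _ => ?_
    by_cases hik : i = k <;> simp [mPow, hik]
  · calc B i j = mPow A 0 i i * B i j := by simp [mPow]
      _ ≤ _ := Finset.le_sup (f := fun k => mPow A 0 i k * B k j) (mem_univ i)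

lemma mPow_succ' (A : Matrix (Fin n) (Fin n) NNReal) (k : ℕ) :
    mPow A (k + 1) = mProd A (mPow A k) := by
  induction k with
  | zero => exact (mPow_zero_mProd A A).trans (mProd_mPow_zero A A).symm
  | succ k ih => rw [mPow, ih, mProd_assoc, ← ih]; rfl

lemma mul_mPow_le_mPow_succ (A : Matrix (Fin n) (Fin n) NNReal) (p : ℕ) (i m j : Fin n) :
    A i m * mPow A p m j ≤ mPow A (p + 1) i j := by
  rw [mPow_succ']
  exact Finset.le_sup (f := fun k => A i k * mPow A p k j) (mem_univ m)

lemma mVec_mProd (B C : Matrix (Fin n) (Fin n) NNReal) (x : Fin n → NNReal) :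
    mVec (mProd B C) x = mVec B (mVec C x) := by
  funext i
  simp only [mVec, mProd, NNReal.finset_sup_mul, NNReal.mul_finset_sup, mul_assoc]
  exact Finset.sup_comm _ _ _

lemma mVec_mPow_zero (A : Matrix (Fin n) (Fin n) NNReal) (x : Fin n → NNReal) :
    mVec (mPow A 0) x = x := by
  funext i
  apply le_antisymm
  · refine Finset.sup_le fun j _ => ?_
    by_cases hij : i = j <;> simp [mPow, hij]
  · calc x i = mPow A 0 i i * x i := by simp [mPow]
      _ ≤ _ := Finset.le_sup (f := fun j => mPow A 0 i j * x j) (mem_univ i)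

lemma mVec_klStar (A : Matrix (Fin n) (Fin n) NNReal) (x : Fin n → NNReal) (i : Fin n) :
    mVec (klStar A) x i = (range n).sup fun k => mVec (mPow A k) x i := by
  simp only [mVec, klStar, NNReal.finset_sup_mul]
  exact Finset.sup_comm _ _ _

lemma mVec_mono {B C : Matrix (Fin n) (Fin n) NNReal} {x y : Fin n → NNReal}
    (hBC : ∀ i j, B i j ≤ C i j) (hxy : x ≤ y) : mVec B x ≤ mVec C y :=
  fun i => Finset.sup_mono_fun fun j _ => mul_le_mul' (hBC i j) (hxy j)

section Walks

/-- `walkWeight A i t` is the weight of the walk that starts at `i` and then visits the vertices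
of `t` in order; it ends at `t.getLastD i`. -/
def walkWeight (A : Matrix (Fin n) (Fin n) NNReal) : Fin n → List (Fin n) → NNReal
  | _, [] => 1
  | i, j :: t => A i j * walkWeight A j t

variable (A : Matrix (Fin n) (Fin n) NNReal)

lemma walkWeight_append (i x : Fin n) (s t : List (Fin n)) :
    walkWeight A i (s ++ x :: t) = walkWeight A i (s ++ [x]) * walkWeight A x t := by
  induction s generalizing i with
  | nil => simp [walkWeight]
  | cons j s ih => simp only [List.cons_append, walkWeight, ih, mul_assoc]

lemma cycleWeight_cons (i : Fin n) (s : List (Fin n)) :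
    cycleWeight A (i :: s) = walkWeight A i (s ++ [i]) := by
  rw [cycleWeight, List.rotate_cons_succ, List.rotate_zero]
  suffices ∀ a, (((a :: s).zip (s ++ [i])).map fun p => A p.1 p.2).prod =
      walkWeight A a (s ++ [i]) from this i
  induction s with
  | nil => simp [walkWeight]
  | cons j s ih => intro a; simp [walkWeight, ih]

lemma walkWeight_le_mPow (i : Fin n) (t : List (Fin n)) :
    walkWeight A i t ≤ mPow A t.length i (t.getLastD i) := by
  induction t generalizing i with
  | nil => simp [walkWeight, mPow]
  | cons j t ih =>
    calc walkWeight A i (j :: t) ≤ A i j * mPow A t.length j (t.getLastD j) :=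
          mul_le_mul_right (ih j) _
      _ ≤ mPow A (j :: t).length i ((j :: t).getLastD i) := by
          rw [List.length_cons, List.getLastD_cons]; exact mul_mPow_le_mPow_succ A _ i j _

lemma exists_walk_of_mPow_ne_zero {p : ℕ} {i j : Fin n} (h : mPow A p i j ≠ 0) :
    ∃ t : List (Fin n), t.length = p ∧ t.getLastD i = j ∧
      mPow A p i j ≤ walkWeight A i t := by
  induction p generalizing i with
  | zero =>
    obtain rfl : i = j := by by_contra hij; simp [mPow, hij] at h
    exact ⟨[], rfl, rfl, by simp [mPow, walkWeight]⟩
  | succ p ih =>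
    obtain ⟨m, -, hm⟩ := Finset.exists_mem_eq_sup univ ⟨i, mem_univ i⟩
      fun m => A i m * mPow A p m j
    rw [mPow_succ'] at h ⊢
    change _ = A i m * mPow A p m j at hm
    rw [mProd, hm] at h ⊢
    obtain ⟨t, rfl, hend, hle⟩ := ih (right_ne_zero_of_mul h)
    exact ⟨m :: t, rfl, List.getLastD_cons.trans hend, mul_le_mul_right hle _⟩

variable {A}

lemma exists_nodup_walk_le (hcyc : ∀ l ≠ [], cycleWeight A l ≤ 1) (i : Fin n)
    (t : List (Fin n)) : ∃ t' : List (Fin n), (i :: t').Nodup ∧ t'.getLastD i = t.getLastD i ∧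
      walkWeight A i t ≤ walkWeight A i t' := by
  induction t generalizing i with
  | nil => exact ⟨[], List.nodup_singleton i, rfl, le_rfl⟩
  | cons j t ih =>
    obtain ⟨u, hnodup, hend, hle⟩ := ih j
    have hstep : walkWeight A i (j :: t) ≤ walkWeight A i (j :: u) := mul_le_mul_right hle _
    by_cases hi : i ∈ j :: u
    · -- cut off the closed walk from `i` back to `i`, whose weight is at most `1`
      obtain ⟨s, z, hsz⟩ := List.append_of_mem hi
      refine ⟨z, hsz ▸ hnodup |>.of_append_right, ?_, ?_⟩
      · rw [List.getLastD_cons, ← hend, ← List.getLastD_cons (a := i) (b := j), hsz]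
        simp [List.getLastD_eq_getLast?, List.getLast?_cons]
      · calc walkWeight A i (j :: t) ≤ walkWeight A i (s ++ [i]) * walkWeight A i z := by
              rw [← walkWeight_append, ← hsz]; exact hstep
          _ ≤ 1 * walkWeight A i z := by
              rw [← cycleWeight_cons]; exact mul_le_mul_left (hcyc _ (List.cons_ne_nil _ _)) _
          _ = walkWeight A i z := one_mul _
    · exact ⟨j :: u, List.nodup_cons.2 ⟨hi, hnodup⟩,
        List.getLastD_cons.trans (hend.trans List.getLastD_cons.symm), hstep⟩

lemma mPow_le_klStar (hcyc : ∀ l ≠ [], cycleWeight A l ≤ 1) (p : ℕ) (i j : Fin n) :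
    mPow A p i j ≤ klStar A i j := by
  by_cases h0 : mPow A p i j = 0
  · simp [h0]
  obtain ⟨t, -, rfl, hle⟩ := exists_walk_of_mPow_ne_zero A h0
  obtain ⟨u, hnodup, hend, hle'⟩ := exists_nodup_walk_le hcyc i t
  have hlen : u.length < n := by simpa using hnodup.length_le_card
  calc mPow A p i (t.getLastD i) ≤ walkWeight A i u := hle.trans hle'
    _ ≤ mPow A u.length i (u.getLastD i) := walkWeight_le_mPow A i u
    _ ≤ klStar A i (t.getLastD i) :=
        hend ▸ Finset.le_sup (f := fun k => mPow A k i (u.getLastD i)) (mem_range.2 hlen)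

end Walks

lemma cycleWeight_le_one {A : Matrix (Fin n) (Fin n) NNReal} (hA : maxCycleMean A = 1)
    {l : List (Fin n)} (hl : l ≠ []) : cycleWeight A l ≤ 1 := by
  have hbdd : BddAbove {x | ∃ l : List (Fin n), l ≠ [] ∧ x = cycleMean A l} := by
    by_contra hbdd
    simp [maxCycleMean, csSup_of_not_bddAbove hbdd] at hA
  have hmean : cycleMean A l ≤ 1 := hA ▸ le_csSup hbdd ⟨l, hl, rfl⟩
  rw [← NNReal.rpow_inv_natCast_pow (cycleWeight A l) (List.length_pos_iff.2 hl).ne']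
  exact pow_le_one₀ zero_le hmean

lemma mVec_klStar_eq_of_mVec_le {A : Matrix (Fin n) (Fin n) NNReal} {x : Fin n → NNReal}
    (hx : mVec A x ≤ x) : mVec (klStar A) x = x := by
  have hpow : ∀ k, mVec (mPow A k) x ≤ x := by
    intro k
    induction k with
    | zero => rw [mVec_mPow_zero]
    | succ k ih =>
      rw [mPow, mVec_mProd]
      exact (mVec_mono (fun _ _ => le_rfl) hx).trans ih
  funext i
  rw [mVec_klStar]
  refine le_antisymm (Finset.sup_le fun k _ => hpow k i) ?_
  calc x i = mVec (mPow A 0) x i := by rw [mVec_mPow_zero]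
    _ ≤ _ := Finset.le_sup (f := fun k => mVec (mPow A k) x i) (mem_range.2 i.pos)

lemma mProd_klStar_le_klStar {A : Matrix (Fin n) (Fin n) NNReal}
    (hcyc : ∀ l ≠ [], cycleWeight A l ≤ 1) (i j : Fin n) :
    mProd A (klStar A) i j ≤ klStar A i j :=
  Finset.sup_le fun m _ => by
    rw [klStar, NNReal.mul_finset_sup]
    exact Finset.sup_le fun k _ =>
      (mul_mPow_le_mPow_succ A k i m j).trans (mPow_le_klStar hcyc _ i j)

lemma mVec_le_of_mVec_klStar_eq {A : Matrix (Fin n) (Fin n) NNReal} {x : Fin n → NNReal}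
    (hcyc : ∀ l ≠ [], cycleWeight A l ≤ 1) (hx : mVec (klStar A) x = x) : mVec A x ≤ x :=
  calc mVec A x = mVec (mProd A (klStar A)) x := by rw [mVec_mProd, hx]
    _ ≤ mVec (klStar A) x := mVec_mono (mProd_klStar_le_klStar hcyc) le_rfl
    _ = x := hx

/-- for definite `A`, subeigenvectors of `A` are exactly
the fixed points of `A*`. -/
theorem stmt_3 {n : ℕ} (A : Matrix (Fin n) (Fin n) NNReal)
    (hdef : maxCycleMean A = 1) :
    {x : Fin n → NNReal | ∀ i, mVec A x i ≤ x i} =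
      {x : Fin n → NNReal | mVec (klStar A) x = x} := by
  ext x
  exact ⟨mVec_klStar_eq_of_mVec_le,
    mVec_le_of_mVec_klStar_eq fun _ hl => cycleWeight_le_one hdef hl⟩
end

section
/- For a definite nonnegative matrix A, the subeigencone V*(A) = {x : A⊗x ≤ x} equals the max-algebraic column span of the Kleene star A*, i.e., the set of vectors of the form max_i λ_i · (A*)_{·i} with λ_i ≥ 0. -/
open Finset

/-!
If `A ⊗ x ≤ x` then `A^m ⊗ x ≤ x` for every `m`, so `A* ⊗ x ≤ x`; since `A*` dominates the
identity, `x = A* ⊗ x`, a max-combination of the columns of `A*` with coefficients `x`.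
Conversely, when `λ(A) ≤ 1` every cycle has weight at most `1`, so deleting cycles from a walk
does not decrease its weight; every walk thus is dominated by a path with fewer than `n` steps,
whence `A^m ≤ A*` for all `m` and `A ⊗ A* ≤ A*`: every column of `A*`, and so every
max-combination of them, is a subeigenvector.
-/

theorem List.exists_eq_append_cons_append_cons_of_not_nodup {α : Type*} :
    ∀ {l : List α}, ¬ l.Nodup → ∃ s x t u, l = s ++ x :: (t ++ x :: u)
  | [], h => absurd List.nodup_nil h
  | a :: l, h => by
    rw [List.nodup_cons, not_and_or, not_not] at h
    rcases h with ha | hl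
    · obtain ⟨t, u, rfl⟩ := List.append_of_mem ha
      exact ⟨[], a, t, u, rfl⟩
    · obtain ⟨s, x, t, u, rfl⟩ := List.exists_eq_append_cons_append_cons_of_not_nodup hl
      exact ⟨a :: s, x, t, u, rfl⟩

theorem List.getLastD_append_cons {α : Type*} (a x : α) (s u : List α) :
    (s ++ x :: u).getLastD a = u.getLastD x := by
  rw [List.getLastD_eq_getLast?, List.getLast?_append_cons, ← List.getLastD_eq_getLast?,
    List.getLastD_cons]

namespace MaxTimes

variable {n : ℕ} (A : Matrix (Fin n) (Fin n) NNReal)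

lemma mProd_assoc (B C : Matrix (Fin n) (Fin n) NNReal) :
    mProd (mProd A B) C = mProd A (mProd B C) := by
  funext i j
  simp only [mProd, NNReal.finset_sup_mul, NNReal.mul_finset_sup]
  rw [Finset.sup_comm]
  simp [mul_assoc]

lemma mPow_zero_mProd (B : Matrix (Fin n) (Fin n) NNReal) : mProd (mPow A 0) B = B := by
  funext i j
  refine le_antisymm (Finset.sup_le fun k _ => ?_) ?_
  · by_cases h : i = k <;> simp [mPow, h]
  · simpa [mProd, mPow] using Finset.le_sup (f := fun k => mPow A 0 i k * B k j) (mem_univ i)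

lemma mProd_mPow_zero (B : Matrix (Fin n) (Fin n) NNReal) : mProd B (mPow A 0) = B := by
  funext i j
  refine le_antisymm (Finset.sup_le fun k _ => ?_) ?_
  · by_cases h : k = j <;> simp [mPow, h]
  · simpa [mProd, mPow] using Finset.le_sup (f := fun k => B i k * mPow A 0 k j) (mem_univ j)

lemma mPow_succ' (k : ℕ) : mPow A (k + 1) = mProd A (mPow A k) := by
  induction k with
  | zero => exact (mPow_zero_mProd A A).trans (mProd_mPow_zero A A).symm
  | succ k ih =>
    calc mPow A (k + 2) = mProd (mProd A (mPow A k)) A := by rw [← ih]; rfl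
      _ = mProd A (mPow A (k + 1)) := mProd_assoc A _ _

lemma one_le_klStar_self (i : Fin n) : 1 ≤ klStar A i i :=
  Finset.le_sup_of_le (f := fun k => mPow A k i i) (mem_range.mpr i.pos) (by simp [mPow])

lemma mPow_mul_le_of_subeigen {x : Fin n → NNReal} (hx : ∀ i, mVec A x i ≤ x i) (m : ℕ)
    (i j : Fin n) : mPow A m i j * x j ≤ x i := by
  induction m generalizing i with
  | zero => by_cases h : i = j <;> simp [mPow, h]
  | succ m ih =>
    rw [mPow_succ', mProd, NNReal.finset_sup_mul]
    refine Finset.sup_le fun k _ => ?_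
    calc A i k * mPow A m k j * x j ≤ A i k * x k := by
          rw [mul_assoc]; exact mul_le_mul_right (ih k) _
      _ ≤ mVec A x i := Finset.le_sup (f := fun k => A i k * x k) (mem_univ k)
      _ ≤ x i := hx i

lemma eq_sup_mul_klStar_of_subeigen {x : Fin n → NNReal} (hx : ∀ i, mVec A x i ≤ x i)
    (i : Fin n) : x i = univ.sup fun k => x k * klStar A i k := by
  refine le_antisymm ?_ (Finset.sup_le fun k _ => ?_)
  · calc x i ≤ x i * klStar A i i := le_mul_of_one_le_right' (one_le_klStar_self A i)
      _ ≤ _ := Finset.le_sup (f := fun k => x k * klStar A i k) (mem_univ i)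
  · rw [klStar, NNReal.mul_finset_sup]
    exact Finset.sup_le fun m _ => mul_comm (x k) _ ▸ mPow_mul_le_of_subeigen A hx m i k

/-- The weight of the walk that starts at `i` and then visits the vertices of `l` in order;
it ends at `l.getLastD i`. -/
def pathWeight : Fin n → List (Fin n) → NNReal
  | _, [] => 1
  | i, j :: l => A i j * pathWeight j l

lemma pathWeight_append (i x : Fin n) (s q : List (Fin n)) :
    pathWeight A i (s ++ x :: q) = pathWeight A i (s ++ [x]) * pathWeight A x q := by
  induction s generalizing i with
  | nil => simp [pathWeight]
  | cons b s ih => simp [pathWeight, ih b, mul_assoc]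

lemma cycleWeight_cons (x : Fin n) (t : List (Fin n)) :
    cycleWeight A (x :: t) = pathWeight A x (t ++ [x]) := by
  have hzip : ∀ a, (((a :: t).zip (t ++ [x])).map fun p => A p.1 p.2).prod =
      pathWeight A a (t ++ [x]) := by
    induction t with
    | nil => simp [pathWeight]
    | cons b t ih => intro a; simp [pathWeight, ih b]
  have hrot : (x :: t).rotate 1 = t ++ [x] := by simp
  rw [cycleWeight, hrot, hzip]

lemma pathWeight_le_mPow (i : Fin n) (l : List (Fin n)) :
    pathWeight A i l ≤ mPow A l.length i (l.getLastD i) := by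
  induction l generalizing i with
  | nil => simp [pathWeight, mPow]
  | cons j l ih =>
    rw [List.length_cons, mPow_succ', List.getLastD_cons]
    exact (mul_le_mul_right (ih j) _).trans
      (Finset.le_sup (f := fun k => A i k * mPow A l.length k (l.getLastD j)) (mem_univ j))

lemma exists_mPow_le_pathWeight {m : ℕ} {i j : Fin n} (h : mPow A m i j ≠ 0) :
    ∃ l : List (Fin n), l.length = m ∧ l.getLastD i = j ∧ mPow A m i j ≤ pathWeight A i l := by
  induction m generalizing i with
  | zero =>
    obtain rfl : i = j := by by_contra hij; simp [mPow, hij] at h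
    exact ⟨[], rfl, rfl, by simp [mPow, pathWeight]⟩
  | succ m ih =>
    rw [mPow_succ'] at h ⊢
    obtain ⟨k, -, hk⟩ := Finset.exists_mem_eq_sup univ ⟨i, mem_univ i⟩
      (fun k => A i k * mPow A m k j)
    rw [mProd, hk] at h ⊢
    obtain ⟨l, hlen, hend, hle⟩ := ih (right_ne_zero_of_mul h)
    exact ⟨k :: l, by simp [hlen], by rw [List.getLastD_cons, hend], mul_le_mul_right hle _⟩

lemma cycleMean_le_maxCycleMean {l : List (Fin n)} (hl : l ≠ []) :
    cycleMean A l ≤ maxCycleMean A := by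
  set M : NNReal := univ.sup fun p : Fin n × Fin n => A p.1 p.2
  have hbdd : BddAbove {x | ∃ l : List (Fin n), l ≠ [] ∧ x = cycleMean A l} := by
    refine ⟨M, ?_⟩
    rintro _ ⟨l, hl, rfl⟩
    have hk : (l.length : ℝ) ≠ 0 := by simpa using hl
    have hw : cycleWeight A l ≤ M ^ l.length := by
      have hentry : ∀ p : Fin n × Fin n, A p.1 p.2 ≤ M := fun p =>
        Finset.le_sup (f := fun p : Fin n × Fin n => A p.1 p.2) (mem_univ p)
      simpa [cycleWeight] using
        List.prod_le_pow_card ((l.zip (l.rotate 1)).map fun p => A p.1 p.2) M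
          (by simpa using fun _ a b _ h => h ▸ hentry (a, b))
    calc cycleMean A l ≤ (M ^ l.length) ^ (l.length : ℝ)⁻¹ :=
          NNReal.rpow_le_rpow hw (by positivity)
      _ = M := by
          rw [← NNReal.rpow_natCast, ← NNReal.rpow_mul, mul_inv_cancel₀ hk, NNReal.rpow_one]
  exact le_csSup hbdd ⟨l, hl, rfl⟩

variable {A}

lemma cycleWeight_le_one (hA : maxCycleMean A ≤ 1) {l : List (Fin n)} (hl : l ≠ []) :
    cycleWeight A l ≤ 1 := by
  have hk : (l.length : ℝ) ≠ 0 := by simpa using hl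
  have hpow : cycleWeight A l = cycleMean A l ^ l.length := by
    rw [cycleMean, ← NNReal.rpow_natCast, ← NNReal.rpow_mul, inv_mul_cancel₀ hk,
      NNReal.rpow_one]
  exact hpow ▸ pow_le_one' ((cycleMean_le_maxCycleMean A hl).trans hA) _

lemma pathWeight_cycle_le (hA : maxCycleMean A ≤ 1) (x : Fin n) (t u : List (Fin n)) :
    pathWeight A x (t ++ x :: u) ≤ pathWeight A x u := by
  rw [pathWeight_append, ← cycleWeight_cons]
  exact mul_le_of_le_one_left' (cycleWeight_le_one hA (List.cons_ne_nil x t))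

/-- Pigeonhole: a walk with at least `n` steps revisits a vertex, and the cycle in between can
be cut out. -/
lemma exists_shorter_path (hA : maxCycleMean A ≤ 1) (i : Fin n) {l : List (Fin n)}
    (hl : n ≤ l.length) : ∃ l' : List (Fin n), l'.length < l.length ∧
      l'.getLastD i = l.getLastD i ∧ pathWeight A i l ≤ pathWeight A i l' := by
  have hdup : ¬ (i :: l).Nodup := fun hnd => by
    have := hnd.length_le_card
    simp only [List.length_cons, Fintype.card_fin] at this
    omega
  rw [List.nodup_cons, not_and_or, not_not] at hdup
  rcases hdup with hi | hdup
  · obtain ⟨t, u, rfl⟩ := List.append_of_mem hi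
    refine ⟨u, ?_, (List.getLastD_append_cons i i t u).symm, pathWeight_cycle_le hA i t u⟩
    simp only [List.length_append, List.length_cons]
    omega
  · obtain ⟨s, x, t, u, rfl⟩ := List.exists_eq_append_cons_append_cons_of_not_nodup hdup
    refine ⟨s ++ x :: u, by simp, by simp only [List.getLastD_append_cons], ?_⟩
    rw [pathWeight_append, pathWeight_append A i x s u]
    exact mul_le_mul_right (pathWeight_cycle_le hA x t u) _

lemma pathWeight_le_klStar (hA : maxCycleMean A ≤ 1) (i : Fin n) (l : List (Fin n)) :
    pathWeight A i l ≤ klStar A i (l.getLastD i) := by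
  induction hlen : l.length using Nat.strong_induction_on generalizing l with
  | _ m ih =>
    by_cases hm : m < n
    · exact (pathWeight_le_mPow A i l).trans (hlen ▸
        Finset.le_sup (f := fun k => mPow A k i (l.getLastD i)) (mem_range.mpr hm))
    · obtain ⟨l', hlt, hend, hle⟩ := exists_shorter_path hA i (l := l) (by omega)
      exact hend ▸ hle.trans (ih _ (hlen ▸ hlt) l' rfl)

lemma mPow_le_klStar (hA : maxCycleMean A ≤ 1) (m : ℕ) (i j : Fin n) :
    mPow A m i j ≤ klStar A i j := by
  by_cases h : mPow A m i j = 0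
  · simp [h]
  obtain ⟨l, -, rfl, hle⟩ := exists_mPow_le_pathWeight A h
  exact hle.trans (pathWeight_le_klStar hA i l)

lemma mul_klStar_le_klStar (hA : maxCycleMean A ≤ 1) (i j k : Fin n) :
    A i j * klStar A j k ≤ klStar A i k := by
  rw [klStar, NNReal.mul_finset_sup]
  refine Finset.sup_le fun m _ => le_trans ?_ (mPow_le_klStar hA (m + 1) i k)
  rw [mPow_succ']
  exact Finset.le_sup (f := fun j => A i j * mPow A m j k) (mem_univ j)

lemma mVec_sup_mul_klStar_le (hA : maxCycleMean A ≤ 1) (c : Fin n → NNReal) (i : Fin n) :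
    mVec A (fun i => univ.sup fun k => c k * klStar A i k) i ≤
      univ.sup fun k => c k * klStar A i k := by
  refine Finset.sup_le fun j _ => ?_
  rw [NNReal.mul_finset_sup]
  refine Finset.sup_le fun k _ => ?_
  calc A i j * (c k * klStar A j k) = c k * (A i j * klStar A j k) := by ring
    _ ≤ c k * klStar A i k := mul_le_mul_right (mul_klStar_le_klStar hA i j k) _
    _ ≤ _ := Finset.le_sup (f := fun k => c k * klStar A i k) (mem_univ k)

end MaxTimes

open MaxTimes in
/-- for definite `A`, the subeigencone `V*(A)` equals the
max-algebraic column span of `A*`. -/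
theorem stmt_4 {n : ℕ} (A : Matrix (Fin n) (Fin n) NNReal)
    (hdef : maxCycleMean A = 1) :
    {x : Fin n → NNReal | ∀ i, mVec A x i ≤ x i} =
      {x : Fin n → NNReal | ∃ c : Fin n → NNReal,
        ∀ i, x i = univ.sup fun k => c k * klStar A i k} := by
  ext x
  constructor
  · exact fun hx => ⟨x, eq_sup_mul_klStar_of_subeigen A hx⟩
  · rintro ⟨c, hc⟩
    obtain rfl : x = fun i => univ.sup fun k => c k * klStar A i k := funext hc
    exact mVec_sup_mul_klStar_le hdef.le c
end

section
/- For a nonnegative n×n matrix A with λ(A) > 0, the subeigencone V*(A) = {y ∈ ℝ₊ⁿ : A⊗y ≤ λ(A)y} is simultaneously: closed under componentwise maximum and nonnegative scaling (a max cone), closed under nonnegative linear combinations (a convex cone), and closed under log-convex combinations (componentwise weighted geometric means of its elements lie in it). -/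
/-! `y ∈ V*(A)` amounts to the entrywise inequalities `a_ij y_j ≤ λ(A) y_i`. Each of them is
preserved by maxima, sums and nonnegative multiples, and also by weighted geometric means, since
a weighted geometric mean with weights summing to one is positively homogeneous and monotone. -/

open Finset

/-- The subeigencone `V*(A) = {y : A ⊗ y ≤ λ(A) y}`. -/
def Vstar {n : ℕ} (A : Matrix (Fin n) (Fin n) NNReal) : Set (Fin n → NNReal) :=
  {y | ∀ i, mVec A y i ≤ maxCycleMean A * y i}

open scoped NNReal

theorem NNReal.rpow_sum_of_nonneg {ι : Type*} (a : ℝ≥0) {s : Finset ι} {f : ι → ℝ}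
    (hf : ∀ x ∈ s, 0 ≤ f x) : a ^ ∑ x ∈ s, f x = ∏ x ∈ s, a ^ f x :=
  NNReal.eq <| by push_cast; exact Real.rpow_sum_of_nonneg a.2 hf

theorem NNReal.prod_mul_rpow_of_sum_eq_one {ι : Type*} {s : Finset ι} (a : ℝ≥0) (x : ι → ℝ≥0)
    {c : ι → ℝ} (hc : ∀ k ∈ s, 0 ≤ c k) (hsum : ∑ k ∈ s, c k = 1) :
    ∏ k ∈ s, (a * x k) ^ c k = a * ∏ k ∈ s, x k ^ c k := by
  simp_rw [NNReal.mul_rpow, prod_mul_distrib, ← NNReal.rpow_sum_of_nonneg a hc, hsum,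
    NNReal.rpow_one]

section Vstar

variable {n : ℕ} {A : Matrix (Fin n) (Fin n) ℝ≥0}

theorem mem_Vstar_iff {y : Fin n → ℝ≥0} :
    y ∈ Vstar A ↔ ∀ i j, A i j * y j ≤ maxCycleMean A * y i := by
  simp only [Vstar, mVec, Set.mem_ofPred_eq, Finset.sup_le_iff, mem_univ, true_implies]

theorem max_mem_Vstar {y z : Fin n → ℝ≥0} (hy : y ∈ Vstar A) (hz : z ∈ Vstar A) :
    (fun i => max (y i) (z i)) ∈ Vstar A := by
  rw [mem_Vstar_iff] at *
  intro i j
  simp only [mul_max]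
  exact max_le_max (hy i j) (hz i j)

theorem const_mul_mem_Vstar (c : ℝ≥0) {y : Fin n → ℝ≥0} (hy : y ∈ Vstar A) :
    (fun i => c * y i) ∈ Vstar A := by
  rw [mem_Vstar_iff] at *
  intro i j
  calc A i j * (c * y j) = c * (A i j * y j) := mul_left_comm _ _ _
    _ ≤ c * (maxCycleMean A * y i) := mul_le_mul_right (hy i j) c
    _ = maxCycleMean A * (c * y i) := mul_left_comm _ _ _

theorem add_mem_Vstar {y z : Fin n → ℝ≥0} (hy : y ∈ Vstar A) (hz : z ∈ Vstar A) :
    (fun i => y i + z i) ∈ Vstar A := by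
  rw [mem_Vstar_iff] at *
  intro i j
  simp only [mul_add]
  exact add_le_add (hy i j) (hz i j)

theorem geomMean_mem_Vstar {m : ℕ} {y : Fin m → Fin n → ℝ≥0} {c : Fin m → ℝ}
    (hy : ∀ k, y k ∈ Vstar A) (hc : ∀ k, 0 ≤ c k) (hsum : ∑ k, c k = 1) :
    (fun i => ∏ k, y k i ^ c k) ∈ Vstar A := by
  simp only [mem_Vstar_iff] at *
  intro i j
  have hc' : ∀ k ∈ univ, 0 ≤ c k := fun k _ => hc k
  calc A i j * ∏ k, y k j ^ c k = ∏ k, (A i j * y k j) ^ c k :=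
        (NNReal.prod_mul_rpow_of_sum_eq_one _ _ hc' hsum).symm
    _ ≤ ∏ k, (maxCycleMean A * y k i) ^ c k :=
        prod_le_prod' fun k _ => NNReal.rpow_le_rpow (hy k i j) (hc k)
    _ = maxCycleMean A * ∏ k, y k i ^ c k := NNReal.prod_mul_rpow_of_sum_eq_one _ _ hc' hsum

end Vstar

theorem stmt_8_general {n : ℕ} (A : Matrix (Fin n) (Fin n) NNReal) :
    (∀ y z, y ∈ Vstar A → z ∈ Vstar A → (fun i => max (y i) (z i)) ∈ Vstar A) ∧
    (∀ (c : NNReal) (y), y ∈ Vstar A → (fun i => c * y i) ∈ Vstar A) ∧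
    (∀ y z, y ∈ Vstar A → z ∈ Vstar A → (fun i => y i + z i) ∈ Vstar A) ∧
    (∀ (m : ℕ) (y : Fin m → Fin n → NNReal) (c : Fin m → ℝ),
      (∀ k, y k ∈ Vstar A) → (∀ k, 0 ≤ c k) → (∑ k, c k) = 1 →
      (fun i => ∏ k, (y k i) ^ (c k)) ∈ Vstar A) :=
  ⟨fun _ _ => max_mem_Vstar, const_mul_mem_Vstar, fun _ _ => add_mem_Vstar,
    fun _ _ _ => geomMean_mem_Vstar⟩

/-- `V*(A)` is a max cone, a convex cone, and a log-convex set. -/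
theorem stmt_8 {n : ℕ} (A : Matrix (Fin n) (Fin n) NNReal)
    (hlam : 0 < maxCycleMean A) :
    (∀ y z, y ∈ Vstar A → z ∈ Vstar A → (fun i => max (y i) (z i)) ∈ Vstar A) ∧
    (∀ (c : NNReal) (y), y ∈ Vstar A → (fun i => c * y i) ∈ Vstar A) ∧
    (∀ y z, y ∈ Vstar A → z ∈ Vstar A → (fun i => y i + z i) ∈ Vstar A) ∧
    (∀ (m : ℕ) (y : Fin m → Fin n → NNReal) (c : Fin m → ℝ),
      (∀ k, y k ∈ Vstar A) → (∀ k, 0 ≤ c k) → (∑ k, c k) = 1 →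
      (fun i => ∏ k, (y k i) ^ (c k)) ∈ Vstar A) :=
  stmt_8_general A
end

section
/- The subeigencone V*(A) is closed under componentwise p-norms: if y, z ∈ V*(A) and p > 0, then the vector with entries (y_iᵖ + z_iᵖ)^{1/p} lies in V*(A). -/
open Finset

/-- `V*(A)` is closed under componentwise p-norms. -/
theorem stmt_9 {n : ℕ} (A : Matrix (Fin n) (Fin n) NNReal)
    (hlam : 0 < maxCycleMean A)
    (y z : Fin n → NNReal) (hy : y ∈ Vstar A) (hz : z ∈ Vstar A)
    (p : ℝ) (hp : 0 < p) :
    (fun i => (y i ^ p + z i ^ p) ^ (1 / p)) ∈ Vstar A := by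
  intro i
  apply Finset.sup_le
  intro j _
  have h1 : A i j * y j ≤ maxCycleMean A * y i :=
    le_trans (Finset.le_sup (f := fun j => A i j * y j) (Finset.mem_univ j)) (hy i)
  have h2 : A i j * z j ≤ maxCycleMean A * z i :=
    le_trans (Finset.le_sup (f := fun j => A i j * z j) (Finset.mem_univ j)) (hz i)
  have hp' : (0:ℝ) ≤ 1 / p := by positivity
  have key : (A i j) ^ p * (y j ^ p + z j ^ p)
      ≤ (maxCycleMean A) ^ p * (y i ^ p + z i ^ p) := by
    rw [mul_add, mul_add, ← NNReal.mul_rpow, ← NNReal.mul_rpow,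
      ← NNReal.mul_rpow, ← NNReal.mul_rpow]
    exact add_le_add (NNReal.rpow_le_rpow h1 hp.le) (NNReal.rpow_le_rpow h2 hp.le)
  calc A i j * (y j ^ p + z j ^ p) ^ (1 / p)
      = ((A i j) ^ p * (y j ^ p + z j ^ p)) ^ (1 / p) := by
        rw [NNReal.mul_rpow, ← NNReal.rpow_mul, mul_one_div, div_self hp.ne',
          NNReal.rpow_one]
    _ ≤ ((maxCycleMean A) ^ p * (y i ^ p + z i ^ p)) ^ (1 / p) :=
        NNReal.rpow_le_rpow key hp'
    _ = maxCycleMean A * (y i ^ p + z i ^ p) ^ (1 / p) := by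
        rw [NNReal.mul_rpow, ← NNReal.rpow_mul, mul_one_div, div_self hp.ne',
          NNReal.rpow_one]
end

section
/- Let A be definite with λ(A) = 1. Then i and j are connected by a path in the critical digraph if and only if column i and column j of A* are positive scalar multiples of each other, if and only if row i and row j of A* are positive scalar multiples of each other. -/
open Finset

namespace Stmt12Aux

open Finset List

variable {n : ℕ}

/-- Weight of a walk starting at `i` and visiting the vertices of `p` in order. -/
def wWeight (A : Matrix (Fin n) (Fin n) NNReal) : Fin n → List (Fin n) → NNReal
  | _, [] => 1
  | i, (j :: p) => A i j * wWeight A j p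

variable (A : Matrix (Fin n) (Fin n) NNReal)

lemma getLastD_append' {α : Type*} (s t : List α) (d : α) :
    (s ++ t).getLastD d = t.getLastD (s.getLastD d) := by
  induction s generalizing d with
  | nil => rfl
  | cons a s ih =>
    rw [List.cons_append, List.getLastD_cons, List.getLastD_cons, ih]

lemma getLastD_concat' {α : Type*} (s : List α) (a d : α) :
    (s ++ [a]).getLastD d = a := by
  rw [getLastD_append']; rfl

lemma wWeight_append (i : Fin n) (s t : List (Fin n)) :
    wWeight A i (s ++ t) = wWeight A i s * wWeight A (s.getLastD i) t := by
  induction s generalizing i with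
  | nil => simp [wWeight]
  | cons b s ih =>
    rw [List.cons_append]
    show A i b * wWeight A b (s ++ t) = A i b * wWeight A b s * wWeight A ((b :: s).getLastD i) t
    rw [ih, List.getLastD_cons, mul_assoc]

lemma wWeight_concat (i : Fin n) (s : List (Fin n)) (a : Fin n) :
    wWeight A i (s ++ [a]) = wWeight A i s * A (s.getLastD i) a := by
  rw [wWeight_append]; simp [wWeight]

lemma zip_weight (t : List (Fin n)) (a c : Fin n) :
    (((a :: t).zip (t ++ [c])).map (fun p => A p.1 p.2)).prod = wWeight A a (t ++ [c]) := by
  induction t generalizing a with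
  | nil => simp [wWeight]
  | cons b t ih =>
    simp only [List.cons_append, List.zip_cons_cons, List.map_cons, List.prod_cons]
    show _ = A a b * wWeight A b (t ++ [c])
    rw [ih]

lemma rotate_one_cons (a : Fin n) (t : List (Fin n)) :
    (a :: t).rotate 1 = t ++ [a] := by
  rw [List.rotate_cons_succ, List.rotate_zero]

lemma cycleWeight_cons (a : Fin n) (t : List (Fin n)) :
    cycleWeight A (a :: t) = wWeight A a (t ++ [a]) := by
  rw [cycleWeight, rotate_one_cons, zip_weight]

lemma cycleWeight_rotate_one (l : List (Fin n)) :
    cycleWeight A (l.rotate 1) = cycleWeight A l := by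
  match l with
  | [] => rfl
  | [a] => simp [rotate_one_cons]
  | a :: b :: t =>
    rw [rotate_one_cons]
    rw [show (b :: t) ++ [a] = b :: (t ++ [a]) from rfl]
    rw [cycleWeight_cons, cycleWeight_cons]
    rw [wWeight_concat, getLastD_concat']
    rw [show (b :: t) ++ [a] = b :: (t ++ [a]) from rfl]
    show wWeight A b (t ++ [a]) * A a b = A a b * wWeight A b (t ++ [a])
    ring

lemma cycleWeight_rotate (l : List (Fin n)) (m : ℕ) :
    cycleWeight A (l.rotate m) = cycleWeight A l := by
  induction m with
  | zero => rw [List.rotate_zero]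
  | succ m ih =>
    have : l.rotate (m + 1) = (l.rotate m).rotate 1 := by rw [List.rotate_rotate]
    rw [this, cycleWeight_rotate_one, ih]

/-- Splitting lemma for membership in the cyclic zip. -/
lemma zsplit (x y c : Fin n) : ∀ (s : List (Fin n)) (a : Fin n),
    (x, y) ∈ (a :: s).zip (s ++ [c]) →
    (∃ s1 s2, a :: s = s1 ++ x :: y :: s2) ∨ (x = s.getLastD a ∧ y = c) := by
  intro s
  induction s with
  | nil =>
    intro a h
    simp only [List.nil_append, List.zip_cons_cons, List.zip_nil_right,
      List.mem_singleton, Prod.mk.injEq] at h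
    exact Or.inr ⟨h.1, h.2⟩
  | cons b s ih =>
    intro a h
    simp only [List.cons_append, List.zip_cons_cons, List.mem_cons, Prod.mk.injEq] at h
    rcases h with ⟨rfl, rfl⟩ | h
    · exact Or.inl ⟨[], s, rfl⟩
    · rcases ih b h with ⟨s1, s2, hs⟩ | ⟨hx, hy⟩
      · exact Or.inl ⟨a :: s1, s2, by rw [List.cons_append, hs]⟩
      · exact Or.inr ⟨by rw [hx, List.getLastD_cons], hy⟩

lemma length_pos_of_fin (i : Fin n) : 0 < n := i.pos

/-- `maxCycleMean` is an upper bound for all cycle means (boundedness). -/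
lemma cycleMean_le_max (l : List (Fin n)) (hl : l ≠ []) :
    cycleMean A l ≤ maxCycleMean A := by
  have hbdd : BddAbove {x | ∃ l : List (Fin n), l ≠ [] ∧ x = cycleMean A l} := by
    set M := 1 ⊔ Finset.univ.sup (fun p : Fin n × Fin n => A p.1 p.2) with hM
    refine ⟨M, ?_⟩
    rintro x ⟨l', hl', rfl⟩
    have hw : cycleWeight A l' ≤ M ^ l'.length := by
      have hb : ∀ z ∈ (l'.zip (l'.rotate 1)).map (fun p => A p.1 p.2), z ≤ M := by
        intro z hz
        obtain ⟨q, _, rfl⟩ := List.mem_map.mp hz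
        exact le_sup_of_le_right (Finset.le_sup (f := fun p : Fin n × Fin n => A p.1 p.2)
          (Finset.mem_univ (q.1, q.2)))
      have := List.prod_le_pow_card _ M hb
      rw [List.length_map, List.length_zip, List.length_rotate, min_self] at this
      exact this
    have hlpos : (0:ℝ) < l'.length := by
      have := List.length_pos_iff.mpr hl'
      exact_mod_cast this
    calc cycleMean A l' = (cycleWeight A l') ^ ((l'.length : ℝ)⁻¹) := rfl
      _ ≤ (M ^ l'.length) ^ ((l'.length : ℝ)⁻¹) :=
          NNReal.rpow_le_rpow hw (by positivity)
      _ = (M ^ (l'.length : ℝ)) ^ ((l'.length : ℝ)⁻¹) := by rw [NNReal.rpow_natCast]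
      _ = M ^ ((l'.length : ℝ) * (l'.length : ℝ)⁻¹) := by rw [← NNReal.rpow_mul]
      _ = M := by rw [mul_inv_cancel₀ (ne_of_gt hlpos), NNReal.rpow_one]
  exact le_csSup hbdd ⟨l, hl, rfl⟩

lemma cycleWeight_eq_mean_rpow (l : List (Fin n)) (hl : l ≠ []) :
    cycleWeight A l = (cycleMean A l) ^ ((l.length : ℝ)) := by
  have hlpos : (0:ℝ) < l.length := by
    have := List.length_pos_iff.mpr hl
    exact_mod_cast this
  rw [cycleMean, ← NNReal.rpow_mul, inv_mul_cancel₀ (ne_of_gt hlpos), NNReal.rpow_one]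

lemma cycleWeight_le_one (hdef : maxCycleMean A = 1) (l : List (Fin n)) (hl : l ≠ []) :
    cycleWeight A l ≤ 1 := by
  rw [cycleWeight_eq_mean_rpow A l hl]
  exact NNReal.rpow_le_one (hdef ▸ cycleMean_le_max A l hl) (by positivity)

lemma cycleMean_eq_one_of_weight (l : List (Fin n)) (hl : l ≠ [])
    (hw : cycleWeight A l = 1) : cycleMean A l = 1 := by
  rw [cycleMean, hw, NNReal.one_rpow]

/-- closed walks have weight at most 1. -/
lemma closed_walk_le_one (hdef : maxCycleMean A = 1) (i : Fin n) (p : List (Fin n))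
    (hp : p.getLastD i = i) : wWeight A i p ≤ 1 := by
  rcases List.eq_nil_or_concat p with rfl | ⟨q, a, rfl⟩
  · exact le_refl _
  · rw [List.concat_eq_append] at hp ⊢
    have ha : a = i := by rw [getLastD_concat'] at hp; exact hp
    subst ha
    rw [← cycleWeight_cons]
    exact cycleWeight_le_one A hdef _ (List.cons_ne_nil _ _)

lemma wWeight_le_mPow (i : Fin n) (p : List (Fin n)) :
    wWeight A i p ≤ mPow A p.length i (p.getLastD i) := by
  induction p using List.reverseRecOn with
  | nil => simp [wWeight, mPow]
  | append_singleton q a ih =>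
    rw [wWeight_concat, getLastD_concat']
    have h1 : (q ++ [a]).length = q.length + 1 := by simp
    rw [h1]
    show wWeight A i q * A (q.getLastD i) a ≤ mProd (mPow A q.length) A i a
    calc wWeight A i q * A (q.getLastD i) a
        ≤ mPow A q.length i (q.getLastD i) * A (q.getLastD i) a :=
          mul_le_mul_left ih _
      _ ≤ _ := Finset.le_sup (f := fun m => mPow A q.length i m * A m a)
          (Finset.mem_univ (q.getLastD i))

lemma exists_walk_of_mPow (k : ℕ) (i j : Fin n) (h : mPow A k i j ≠ 0) :
    ∃ p : List (Fin n), p.length = k ∧ p.getLastD i = j ∧ wWeight A i p = mPow A k i j := by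
  induction k generalizing j with
  | zero =>
    have hij : i = j := by
      by_contra hne
      exact h (by simp [mPow, hne])
    exact ⟨[], rfl, hij, by simp [wWeight, mPow, hij]⟩
  | succ k ih =>
    have hne : (Finset.univ : Finset (Fin n)).Nonempty := ⟨i, Finset.mem_univ i⟩
    obtain ⟨m, _, hm⟩ := Finset.exists_mem_eq_sup Finset.univ hne
      (fun m => mPow A k i m * A m j)
    have heq : mPow A (k+1) i j = mPow A k i m * A m j := hm
    have hm0 : mPow A k i m ≠ 0 := by
      intro h0; rw [heq, h0, zero_mul] at h; exact h rfl
    obtain ⟨p, hlen, hend, hw⟩ := ih m hm0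
    refine ⟨p ++ [j], by simp [hlen], getLastD_concat' _ _ _, ?_⟩
    rw [wWeight_concat, hend, hw, heq]

lemma mPow_le_klStar (k : ℕ) (hk : k < n) (i j : Fin n) :
    mPow A k i j ≤ klStar A i j :=
  Finset.le_sup (f := fun k => mPow A k i j) (Finset.mem_range.mpr hk)

/-- Any walk's weight is at most the corresponding Kleene star entry. -/
lemma wWeight_le_klStar (hdef : maxCycleMean A = 1) :
    ∀ (m : ℕ) (p : List (Fin n)) (i : Fin n), p.length ≤ m →
    wWeight A i p ≤ klStar A i (p.getLastD i) := by
  intro m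
  induction m with
  | zero =>
    intro p i hp
    rw [List.length_eq_zero_iff.mp (Nat.le_zero.mp hp)]
    calc wWeight A i [] = mPow A 0 i i := by simp [wWeight, mPow]
      _ ≤ klStar A i i := mPow_le_klStar A 0 i.pos i i
  | succ m ih =>
    intro p i hp
    by_cases hlen : p.length < n
    · exact (wWeight_le_mPow A i p).trans (mPow_le_klStar A p.length hlen _ _)
    · push_neg at hlen
      -- the list i :: p has a duplicate
      have hcard : Fintype.card (Fin n) < (i :: p).length := by
        simp [Fintype.card_fin]; omega
      have hnodup : ¬ (i :: p).Nodup := fun h => absurd h.length_le_card (by omega)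
      rw [List.nodup_iff_sublist] at hnodup
      push_neg at hnodup
      obtain ⟨a, ha⟩ := hnodup
      -- decompose
      have hdecomp : ∃ l1 l2 l3, i :: p = l1 ++ a :: (l2 ++ a :: l3) := by
        clear hp hlen hcard
        generalize hl : i :: p = l at ha
        clear hl
        induction l with
        | nil => cases ha
        | cons b l ihl =>
          cases ha with
          | cons _ h =>
            obtain ⟨l1, l2, l3, h'⟩ := ihl h
            exact ⟨b :: l1, l2, l3, by rw [List.cons_append, h']⟩
          | cons_cons _ h =>
            have hm : a ∈ l := (List.singleton_sublist).mp h
            obtain ⟨s, t, hst⟩ := List.append_of_mem hm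
            exact ⟨[], s, t, by rw [hst]; rfl⟩
      obtain ⟨l1, l2, l3, hd⟩ := hdecomp
      have hp1 : p.length ≤ m + 1 := hp
      match l1, hd with
      | [], hd =>
        rw [List.nil_append] at hd
        obtain ⟨hai, hpd⟩ := List.cons_eq_cons.mp hd
        subst hai
        -- p = l2 ++ i :: l3
        have hp2 : p = (l2 ++ [i]) ++ l3 := by rw [hpd]; simp
        have hl3 : l3.length ≤ m := by
          have := congrArg List.length hp2
          simp at this; omega
        have hle : wWeight A i p ≤ wWeight A i l3 := by
          rw [hp2, wWeight_append, getLastD_concat']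
          calc wWeight A i (l2 ++ [i]) * wWeight A i l3
              ≤ 1 * wWeight A i l3 :=
                mul_le_mul_left (closed_walk_le_one A hdef i _ (getLastD_concat' _ _ _)) _
            _ = wWeight A i l3 := one_mul _
        have hend : p.getLastD i = l3.getLastD i := by
          rw [hp2, getLastD_append', getLastD_concat']
        rw [hend]
        exact hle.trans (ih l3 i hl3)
      | b :: l1', hd =>
        rw [List.cons_append] at hd
        obtain ⟨hbi, hpd⟩ := List.cons_eq_cons.mp hd
        -- p = l1' ++ a :: (l2 ++ a :: l3)
        have hp2 : p = (l1' ++ [a]) ++ ((l2 ++ [a]) ++ l3) := by rw [hpd]; simp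
        set p' : List (Fin n) := (l1' ++ [a]) ++ l3 with hp'
        have hlp' : p'.length ≤ m := by
          have := congrArg List.length hp2
          simp [hp'] at this ⊢; omega
        have hle : wWeight A i p ≤ wWeight A i p' := by
          have e1 : wWeight A i p
              = wWeight A i (l1' ++ [a]) * wWeight A a (l2 ++ [a] ++ l3) := by
            rw [hp2]
            have := wWeight_append A i (l1' ++ [a]) (l2 ++ [a] ++ l3)
            rwa [getLastD_concat'] at this
          have e2 : wWeight A a (l2 ++ [a] ++ l3)
              = wWeight A a (l2 ++ [a]) * wWeight A a l3 := by
            have := wWeight_append A a (l2 ++ [a]) l3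
            rwa [getLastD_concat'] at this
          have e3 : wWeight A i p' = wWeight A i (l1' ++ [a]) * wWeight A a l3 := by
            rw [hp']
            have := wWeight_append A i (l1' ++ [a]) l3
            rwa [getLastD_concat'] at this
          rw [e1, e2, e3, ← mul_assoc]
          apply mul_le_mul_left
          calc wWeight A i (l1' ++ [a]) * wWeight A a (l2 ++ [a])
              ≤ wWeight A i (l1' ++ [a]) * 1 :=
                mul_le_mul_right (closed_walk_le_one A hdef a _ (getLastD_concat' _ _ _)) _
            _ = wWeight A i (l1' ++ [a]) := mul_one _
        have hend : p.getLastD i = p'.getLastD i := by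
          rw [hp2, hp', getLastD_append', getLastD_append', getLastD_concat',
            getLastD_append', getLastD_concat']
        rw [hend]
        exact hle.trans (ih p' i hlp')

lemma wWeight_le_klStar' (hdef : maxCycleMean A = 1) (p : List (Fin n)) (i : Fin n) :
    wWeight A i p ≤ klStar A i (p.getLastD i) :=
  wWeight_le_klStar A hdef p.length p i (le_refl _)

lemma klStar_diag (hdef : maxCycleMean A = 1) (i : Fin n) : klStar A i i = 1 := by
  apply _root_.le_antisymm
  · apply Finset.sup_le
    intro k _
    by_cases h0 : mPow A k i i = 0
    · rw [h0]; exact zero_le_one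
    · obtain ⟨p, _, hend, hw⟩ := exists_walk_of_mPow A k i i h0
      rw [← hw]
      exact closed_walk_le_one A hdef i p hend
  · have : mPow A 0 i i ≤ klStar A i i := mPow_le_klStar A 0 i.pos i i
    simpa [mPow] using this

/-- Realize a nonzero Kleene star entry by a walk. -/
lemma exists_walk_of_klStar (i j : Fin n) (h : klStar A i j ≠ 0) :
    ∃ p : List (Fin n), p.getLastD i = j ∧ wWeight A i p = klStar A i j := by
  have hne : (Finset.range n).Nonempty := ⟨0, Finset.mem_range.mpr i.pos⟩
  obtain ⟨m, _, hm⟩ := Finset.exists_mem_eq_sup (Finset.range n) hne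
    (fun k => mPow A k i j)
  have heq : klStar A i j = mPow A m i j := hm
  have hm0 : mPow A m i j ≠ 0 := by rw [← heq]; exact h
  obtain ⟨p, _, hend, hw⟩ := exists_walk_of_mPow A m i j hm0
  exact ⟨p, hend, by rw [hw, heq]⟩

lemma append_star (hdef : maxCycleMean A = 1) (k y x : Fin n) (p : List (Fin n))
    (hp : p.getLastD y = x) : klStar A k y * wWeight A y p ≤ klStar A k x := by
  by_cases h0 : klStar A k y = 0
  · rw [h0, zero_mul]; exact zero_le
  · obtain ⟨q, hend, hw⟩ := exists_walk_of_klStar A k y h0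
    calc klStar A k y * wWeight A y p = wWeight A k (q ++ p) := by
          rw [wWeight_append, hw, hend]
      _ ≤ klStar A k ((q ++ p).getLastD k) := wWeight_le_klStar' A hdef _ _
      _ = klStar A k x := by rw [getLastD_append', hend, hp]

lemma prepend_star (hdef : maxCycleMean A = 1) (x k : Fin n) (p : List (Fin n)) :
    wWeight A x p * klStar A (p.getLastD x) k ≤ klStar A x k := by
  by_cases h0 : klStar A (p.getLastD x) k = 0
  · rw [h0, mul_zero]; exact zero_le
  · obtain ⟨q, hend, hw⟩ := exists_walk_of_klStar A (p.getLastD x) k h0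
    calc wWeight A x p * klStar A (p.getLastD x) k = wWeight A x (p ++ q) := by
          rw [wWeight_append, hw]
      _ ≤ klStar A x ((p ++ q).getLastD x) := wWeight_le_klStar' A hdef _ _
      _ = klStar A x k := by rw [getLastD_append', hend]

/-- Structure of a critical edge: there is a return walk of complementary weight. -/
lemma crit_struct (hdef : maxCycleMean A = 1) {x y : Fin n} (h : criticalEdge A x y) :
    ∃ p : List (Fin n), p.getLastD y = x ∧ A x y * wWeight A y p = 1 := by
  obtain ⟨l, hl, hmean, hmem⟩ := h
  have hw1 : cycleWeight A l = 1 := by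
    rw [cycleWeight_eq_mean_rpow A l hl, hmean, hdef, NNReal.one_rpow]
  match l, hl with
  | a :: s, _ =>
    rw [rotate_one_cons] at hmem
    rcases zsplit x y a s a hmem with ⟨s1, s2, hs⟩ | ⟨hx, hy⟩
    · -- a :: s = s1 ++ x :: y :: s2
      have hrot : (a :: s).rotate s1.length = x :: (y :: (s2 ++ s1)) := by
        rw [hs, List.rotate_eq_drop_append_take (by simp only [List.length_append, List.length_cons]; omega)]
        rw [List.drop_left' rfl, List.take_left' rfl]
        simp
      have hw2 : cycleWeight A (x :: (y :: (s2 ++ s1))) = 1 := by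
        rw [← hrot, cycleWeight_rotate]; exact hw1
      rw [cycleWeight_cons, List.cons_append] at hw2
      refine ⟨s2 ++ s1 ++ [x], getLastD_concat' _ _ _, ?_⟩
      show wWeight A x (y :: (s2 ++ s1 ++ [x])) = 1
      exact hw2
    · -- x is the last of s (or a), y = a
      subst hy
      rw [cycleWeight_cons, wWeight_concat] at hw1
      refine ⟨s, hx.symm, ?_⟩
      rw [← hx] at hw1
      rw [mul_comm]
      exact hw1

/-- Column proportionality across a critical edge. -/
lemma crit_cols (hdef : maxCycleMean A = 1) {x y : Fin n} (h : criticalEdge A x y) :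
    ∃ c : NNReal, 0 < c ∧ ∀ k, klStar A k x = c * klStar A k y := by
  obtain ⟨p, hend, hw⟩ := crit_struct A hdef h
  refine ⟨wWeight A y p, ?_, ?_⟩
  · rcases eq_zero_or_pos (wWeight A y p) with h0 | h0
    · rw [h0, mul_zero] at hw; exact absurd hw.symm one_ne_zero
    · exact h0
  · intro k
    have h1 : klStar A k y * wWeight A y p ≤ klStar A k x :=
      append_star A hdef k y x p hend
    have h2 : klStar A k x * A x y ≤ klStar A k y := by
      have := append_star A hdef k x y [y] (by rfl)
      simpa [wWeight] using this
    apply _root_.le_antisymm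
    · calc klStar A k x = klStar A k x * (A x y * wWeight A y p) := by rw [hw, mul_one]
        _ = (klStar A k x * A x y) * wWeight A y p := by ring
        _ ≤ klStar A k y * wWeight A y p := mul_le_mul_left h2 _
        _ = wWeight A y p * klStar A k y := mul_comm _ _
    · rw [mul_comm]; exact h1

/-- Row proportionality across a critical edge. -/
lemma crit_rows (hdef : maxCycleMean A = 1) {x y : Fin n} (h : criticalEdge A x y) :
    ∃ c : NNReal, 0 < c ∧ ∀ k, klStar A x k = c * klStar A y k := by
  obtain ⟨p, hend, hw⟩ := crit_struct A hdef h
  refine ⟨A x y, ?_, ?_⟩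
  · rcases eq_zero_or_pos (A x y) with h0 | h0
    · rw [h0, zero_mul] at hw; exact absurd hw.symm one_ne_zero
    · exact h0
  · intro k
    have h1 : A x y * klStar A y k ≤ klStar A x k := by
      have := prepend_star A hdef x k [y]
      simpa [wWeight] using this
    have h2 : wWeight A y p * klStar A x k ≤ klStar A y k := by
      have := prepend_star A hdef y k p
      rw [hend] at this
      exact this
    apply _root_.le_antisymm
    · calc klStar A x k = (A x y * wWeight A y p) * klStar A x k := by rw [hw, one_mul]
        _ = A x y * (wWeight A y p * klStar A x k) := by ring
        _ ≤ A x y * klStar A y k := mul_le_mul_right h2 _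
    · exact h1

lemma zip_trunc {α : Type*} : ∀ (s u t : List α), t.length ≤ s.length →
    (s ++ u).zip t = s.zip t := by
  intro s
  induction s with
  | nil => intro u t ht; rw [List.length_eq_zero_iff.mp (Nat.le_zero.mp ht)]; simp
  | cons a s ih =>
    intro u t ht
    match t with
    | [] => simp
    | b :: t' =>
      rw [List.cons_append, List.zip_cons_cons, List.zip_cons_cons, ih u t' (by simpa using ht)]

lemma consec_sub {α : Type*} : ∀ (s t : List α) (x y : α),
    (x, y) ∈ s.zip s.tail → (x, y) ∈ (s ++ t).zip (s ++ t).tail := by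
  intro s
  induction s with
  | nil => intro t x y h; cases h
  | cons a s ih =>
    intro t x y h
    match s, h with
    | b :: s', h =>
      simp only [List.tail_cons] at h
      rw [List.zip_cons_cons] at h
      show (x, y) ∈ (a :: (b :: (s' ++ t))).zip (b :: (s' ++ t))
      rw [List.zip_cons_cons]
      rcases List.mem_cons.mp h with h | h
      · exact List.mem_cons.mpr (Or.inl h)
      · exact List.mem_cons.mpr (Or.inr (ih t x y h))

lemma chain_rtg {α : Type*} (r : α → α → Prop) : ∀ (s : List α) (a : α),
    (∀ p ∈ (a :: s).zip s, r p.1 p.2) → Relation.ReflTransGen r a (s.getLastD a) := by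
  intro s
  induction s with
  | nil => intro a _; exact Relation.ReflTransGen.refl
  | cons b s ih =>
    intro a h
    rw [List.zip_cons_cons] at h
    have hab : r a b := h (a, b) (List.mem_cons_self)
    have := ih b (fun p hp => h p (List.mem_cons_of_mem _ hp))
    rw [List.getLastD_cons]
    exact Relation.ReflTransGen.head hab this

/-- If `klStar i j * klStar j i = 1` then `i` reaches `j` in the critical digraph. -/
lemma star_prod (hdef : maxCycleMean A = 1) (i j : Fin n)
    (h : klStar A i j * klStar A j i = 1) :
    Relation.ReflTransGen (criticalEdge A) i j := by
  by_cases hij : i = j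
  · subst hij; exact Relation.ReflTransGen.refl
  · have h1 : klStar A i j ≠ 0 := fun h0 => by rw [h0, zero_mul] at h; exact one_ne_zero h.symm
    have h2 : klStar A j i ≠ 0 := fun h0 => by rw [h0, mul_zero] at h; exact one_ne_zero h.symm
    obtain ⟨p, hpend, hpw⟩ := exists_walk_of_klStar A i j h1
    obtain ⟨q, hqend, hqw⟩ := exists_walk_of_klStar A j i h2
    have hpne : p ≠ [] := fun h0 => hij (by rw [h0] at hpend; exact hpend)
    have hqne : q ≠ [] := fun h0 => (hij (by rw [h0] at hqend; exact hqend.symm))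
    set r : List (Fin n) := p ++ q with hr
    have hrw : wWeight A i r = 1 := by
      rw [hr, wWeight_append, hpend, hpw, hqw, h]
    have hrend : r.getLastD i = i := by
      rw [hr, getLastD_append', hpend, hqend]
    have hrne : r ≠ [] := fun h0 => hpne (List.append_eq_nil_iff.mp (hr ▸ h0)).1
    obtain ⟨r0, a, hr0⟩ := (List.eq_nil_or_concat r).resolve_left hrne
    rw [List.concat_eq_append] at hr0
    have hai : a = i := by rw [hr0, getLastD_concat'] at hrend; exact hrend
    subst hai
    set l : List (Fin n) := a :: r0 with hl
    have hlw : cycleWeight A l = 1 := by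
      rw [hl, cycleWeight_cons, ← hr0, hrw]
    have hcrit : ∀ z w : Fin n, (z, w) ∈ l.zip (l.rotate 1) → criticalEdge A z w :=
      fun z w hm => ⟨l, List.cons_ne_nil _ _,
        by rw [cycleMean_eq_one_of_weight A l (List.cons_ne_nil _ _) hlw, hdef], hm⟩
    -- edges of i :: p are critical
    have hzip : (a :: r).zip r = l.zip (l.rotate 1) := by
      rw [hl, rotate_one_cons]
      conv_lhs => rw [hr0]
      rw [← List.cons_append]
      exact zip_trunc (a :: r0) [a] (r0 ++ [a]) (by simp)
    have hedges : ∀ pr ∈ (a :: p).zip p, criticalEdge A pr.1 pr.2 := by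
      intro pr hpr
      apply hcrit pr.1 pr.2
      rw [← hzip]
      have : (pr.1, pr.2) ∈ ((a :: p) ++ q).zip ((a :: p) ++ q).tail :=
        consec_sub (a :: p) q pr.1 pr.2 (by simpa using hpr)
      simpa [hr] using this
    have := chain_rtg (criticalEdge A) p a hedges
    rw [hpend] at this
    exact this

/-- Forward direction: reachability gives column proportionality. -/
lemma rtg_cols (hdef : maxCycleMean A = 1) {i j : Fin n}
    (h : Relation.ReflTransGen (criticalEdge A) i j) :
    ∃ c : NNReal, 0 < c ∧ ∀ k, klStar A k i = c * klStar A k j := by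
  induction h with
  | refl => exact ⟨1, one_pos, fun k => (one_mul _).symm⟩
  | tail _ hedge ih =>
    obtain ⟨c1, hc1, hcol1⟩ := ih
    obtain ⟨c2, hc2, hcol2⟩ := crit_cols A hdef hedge
    exact ⟨c1 * c2, mul_pos hc1 hc2, fun k => by rw [hcol1 k, hcol2 k, mul_assoc]⟩

lemma rtg_rows (hdef : maxCycleMean A = 1) {i j : Fin n}
    (h : Relation.ReflTransGen (criticalEdge A) i j) :
    ∃ c : NNReal, 0 < c ∧ ∀ k, klStar A i k = c * klStar A j k := by
  induction h with
  | refl => exact ⟨1, one_pos, fun k => (one_mul _).symm⟩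
  | tail _ hedge ih =>
    obtain ⟨c1, hc1, hrow1⟩ := ih
    obtain ⟨c2, hc2, hrow2⟩ := crit_rows A hdef hedge
    exact ⟨c1 * c2, mul_pos hc1 hc2, fun k => by rw [hrow1 k, hrow2 k, mul_assoc]⟩

end Stmt12Aux

/-- for definite `A`, `i` reaches `j` in the critical digraph iff
columns `i` and `j` of `A*` are positively proportional, iff rows `i` and `j`
of `A*` are positively proportional. -/
theorem stmt_12 {n : ℕ} (A : Matrix (Fin n) (Fin n) NNReal)
    (hdef : maxCycleMean A = 1) (i j : Fin n) :
    (Relation.ReflTransGen (criticalEdge A) i j ↔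
      ∃ c : NNReal, 0 < c ∧ ∀ k, klStar A k i = c * klStar A k j) ∧
    (Relation.ReflTransGen (criticalEdge A) i j ↔
      ∃ c : NNReal, 0 < c ∧ ∀ k, klStar A i k = c * klStar A j k) := by
  constructor
  · constructor
    · exact fun h => Stmt12Aux.rtg_cols A hdef h
    · rintro ⟨c, hc, hcol⟩
      apply Stmt12Aux.star_prod A hdef i j
      have hii : klStar A i i = 1 := Stmt12Aux.klStar_diag A hdef i
      have hjj : klStar A j j = 1 := Stmt12Aux.klStar_diag A hdef j
      have e1 : (1:NNReal) = c * klStar A i j := by rw [← hii, hcol i]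
      have e2 : klStar A j i = c := by rw [hcol j, hjj, mul_one]
      rw [e2, mul_comm]
      exact e1.symm
  · constructor
    · exact fun h => Stmt12Aux.rtg_rows A hdef h
    · rintro ⟨c, hc, hrow⟩
      apply Stmt12Aux.star_prod A hdef i j
      have hii : klStar A i i = 1 := Stmt12Aux.klStar_diag A hdef i
      have hjj : klStar A j j = 1 := Stmt12Aux.klStar_diag A hdef j
      have e1 : (1:NNReal) = c * klStar A j i := by rw [← hii, hrow i]
      have e2 : klStar A i j = c := by rw [hrow j, hjj, mul_one]
      rw [e2]
      exact e1.symm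
end
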